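/- Under the assumptions of the previous statement, the matrix V' L̄ V is positive definite, where L̄ = L ⊗ I_n and L = Π_S − S'Π_S S. -/

import Mathlib

open Matrix
open scoped Kronecker ComplexOrder

/-! With `π` stationary for the row-stochastic `S`,
`2 yᵀ L y = ∑ᵢ πᵢ ∑ⱼ ∑ₖ Sᵢⱼ Sᵢₖ (yⱼ - yₖ)²`, so `L`, hence `L ⊗ Iₙ` and `Vᵀ (L ⊗ Iₙ) V`, is positive
semidefinite. If `L y = 0`, the term `k = i` (where `Sᵢᵢ > 0`) forces `yᵢ = yⱼ` whenever
`Sᵢⱼ ≠ 0`, so `y` is constant by irreducibility. Thus if `(L ⊗ Iₙ) V x = 0`, all blocks `Vᵢ xᵢ`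
of `V x` coincide; their common value lies in `⋂ᵢ col Vᵢ = 0`, and each `Vᵢ` is injective,
so `x = 0`. -/

theorem Fintype.sum_sum_mul_mul_sub_sq {ι R : Type*} [Fintype ι] [CommRing R] (s y : ι → R) :
    ∑ j, ∑ k, s j * s k * (y j - y k) ^ 2
      = 2 * ((∑ j, s j) * ∑ j, s j * y j ^ 2 - (∑ j, s j * y j) ^ 2) := by
  have expand : ∀ j k, s j * s k * (y j - y k) ^ 2
      = s k * (s j * y j ^ 2) + s j * (s k * y k ^ 2) - 2 * (s j * y j) * (s k * y k) :=
    fun j k => by ring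
  simp only [expand, Finset.sum_sub_distrib, Finset.sum_add_distrib, ← Finset.mul_sum,
    ← Finset.sum_mul]
  ring

namespace Matrix

section Laplacian

variable {ι R : Type*} [Fintype ι] [DecidableEq ι]

def stochasticLaplacian [CommRing R] (S : Matrix ι ι R) (π : ι → R) : Matrix ι ι R :=
  diagonal π - Sᵀ * diagonal π * S

theorem dotProduct_stochasticLaplacian_mulVec [CommRing R] {S : Matrix ι ι R} {π : ι → R}
    (hstat : Sᵀ *ᵥ π = π) (y : ι → R) :
    y ⬝ᵥ stochasticLaplacian S π *ᵥ y
      = ∑ i, π i * (∑ j, S i j * y j ^ 2 - (∑ j, S i j * y j) ^ 2) := by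
  have hdiagonal : y ⬝ᵥ diagonal π *ᵥ y = ∑ i, π i * ∑ j, S i j * y j ^ 2 := by
    have hcol : ∀ j, π j = ∑ i, S i j * π i := fun j => by
      simpa [mulVec, dotProduct] using (congrFun hstat j).symm
    simp only [dotProduct, mulVec_diagonal, Finset.mul_sum]
    rw [Finset.sum_comm]
    refine Finset.sum_congr rfl fun j _ => ?_
    rw [hcol j, Finset.sum_mul, Finset.mul_sum]
    exact Finset.sum_congr rfl fun i _ => by ring
  have hquad : y ⬝ᵥ (Sᵀ * diagonal π * S) *ᵥ y = ∑ i, π i * (∑ j, S i j * y j) ^ 2 := by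
    rw [← mulVec_mulVec, ← mulVec_mulVec, dotProduct_mulVec, vecMul_transpose]
    simp only [dotProduct, mulVec_diagonal]
    exact Finset.sum_congr rfl fun i _ => by simp only [mulVec, dotProduct]; ring
  rw [stochasticLaplacian, sub_mulVec, dotProduct_sub, hdiagonal, hquad, ← Finset.sum_sub_distrib]
  simp only [mul_sub]

theorem two_mul_dotProduct_stochasticLaplacian_mulVec [CommRing R] {S : Matrix ι ι R}
    {π : ι → R} (hrow : ∀ i, ∑ j, S i j = 1) (hstat : Sᵀ *ᵥ π = π) (y : ι → R) :
    2 * (y ⬝ᵥ stochasticLaplacian S π *ᵥ y)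
      = ∑ i, π i * ∑ j, ∑ k, S i j * S i k * (y j - y k) ^ 2 := by
  simp only [dotProduct_stochasticLaplacian_mulVec hstat, Fintype.sum_sum_mul_mul_sub_sq, hrow,
    one_mul, Finset.mul_sum]
  exact Finset.sum_congr rfl fun i _ => by ring

theorem posSemidef_stochasticLaplacian {S : Matrix ι ι ℝ} {π : ι → ℝ}
    (hnonneg : ∀ i j, 0 ≤ S i j) (hrow : ∀ i, ∑ j, S i j = 1) (hstat : Sᵀ *ᵥ π = π)
    (hπ : ∀ i, 0 ≤ π i) : (stochasticLaplacian S π).PosSemidef := by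
  refine PosSemidef.of_dotProduct_mulVec_nonneg ?_ fun y => ?_
  · rw [isHermitian_iff_isSymm]
    refine (isSymm_diagonal π).sub ?_
    simp [IsSymm, transpose_mul, Matrix.mul_assoc]
  · have hsos : 0 ≤ ∑ i, π i * ∑ j, ∑ k, S i j * S i k * (y j - y k) ^ 2 :=
      Finset.sum_nonneg fun i _ => mul_nonneg (hπ i) <| Finset.sum_nonneg fun j _ =>
        Finset.sum_nonneg fun k _ => by have := hnonneg i j; have := hnonneg i k; positivity
    rw [star_trivial]
    linarith [two_mul_dotProduct_stochasticLaplacian_mulVec hrow hstat y]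

theorem eq_of_stochasticLaplacian_mulVec_eq_zero {S : Matrix ι ι ℝ} {π : ι → ℝ}
    (hnonneg : ∀ i j, 0 ≤ S i j) (hrow : ∀ i, ∑ j, S i j = 1) (hstat : Sᵀ *ᵥ π = π)
    (hdiag : ∀ i, 0 < S i i) (hπ : ∀ i, 0 < π i)
    (hconn : ∀ i j, Relation.TransGen (fun a b => S a b ≠ 0) i j)
    {y : ι → ℝ} (hy : stochasticLaplacian S π *ᵥ y = 0) (i j : ι) : y i = y j := by
  have hnn : ∀ a b c, 0 ≤ π a * (S a b * S a c * (y b - y c) ^ 2) := fun a b c => by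
    have := hnonneg a b; have := hnonneg a c; have := hπ a; positivity
  have hzero : ∑ a, ∑ b, ∑ c, π a * (S a b * S a c * (y b - y c) ^ 2) = 0 := by
    simp only [← Finset.mul_sum]
    rw [← two_mul_dotProduct_stochasticLaplacian_mulVec hrow hstat, hy, dotProduct_zero,
      mul_zero]
  have hterm : ∀ a b c, π a * (S a b * S a c * (y b - y c) ^ 2) = 0 := fun a b c => by
    have h1 := (Finset.sum_eq_zero_iff_of_nonneg fun a _ => Finset.sum_nonneg fun b _ =>
      Finset.sum_nonneg fun c _ => hnn a b c).1 hzero a (Finset.mem_univ a)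
    have h2 := (Finset.sum_eq_zero_iff_of_nonneg fun b _ => Finset.sum_nonneg fun c _ =>
      hnn a b c).1 h1 b (Finset.mem_univ b)
    exact (Finset.sum_eq_zero_iff_of_nonneg fun c _ => hnn a b c).1 h2 c (Finset.mem_univ c)
  have hstep : ∀ a b, S a b ≠ 0 → y a = y b := fun a b hab => by
    simpa [(hπ a).ne', hab, (hdiag a).ne', sub_eq_zero, eq_comm] using hterm a b a
  induction hconn i j with
  | single hab => exact hstep _ _ hab
  | tail _ hbc ih => exact ih.trans (hstep _ _ hbc)

end Laplacian

theorem kronecker_one_mulVec_apply {l ι κ R : Type*} [Fintype ι] [Fintype κ] [DecidableEq κ]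
    [NonAssocSemiring R] (A : Matrix l ι R) (y : ι × κ → R) (i : l) (α : κ) :
    ((A ⊗ₖ (1 : Matrix κ κ R)) *ᵥ y) (i, α) = (A *ᵥ fun j => y (j, α)) i := by
  simp [mulVec, dotProduct, Fintype.sum_prod_type, one_apply]

theorem PosSemidef.posDef_conjTranspose_mul_mul_same {n k 𝕜 : Type*} [Fintype n] [Fintype k]
    [RCLike 𝕜] {A : Matrix n n 𝕜} (hA : A.PosSemidef) {B : Matrix n k 𝕜}
    (hB : ∀ x, A *ᵥ (B *ᵥ x) = 0 → x = 0) : (Bᴴ * A * B).PosDef := by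
  refine PosDef.of_dotProduct_mulVec_pos (isHermitian_conjTranspose_mul_mul B hA.1)
    fun x hx => ?_
  rw [← mulVec_mulVec, ← mulVec_mulVec, dotProduct_mulVec, ← star_mulVec]
  refine (hA.dotProduct_mulVec_nonneg _).lt_of_ne fun h => hx (hB x ?_)
  exact (hA.dotProduct_mulVec_zero_iff _).1 h.symm

section BlockColumns

variable {m n R : Type*} [Fintype m] [DecidableEq m] [CommRing R]
  {d : m → Type*} [∀ i, Fintype (d i)] {B : ∀ i, Matrix n (d i) R}
  {V : Matrix (m × n) (Σ i, d i) R}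

theorem mulVec_apply_of_blockwise (hV : ∀ p c, V p c = if p.1 = c.1 then B c.1 p.2 c.2 else 0)
    (x : (Σ i, d i) → R) (i : m) (α : n) :
    (V *ᵥ x) (i, α) = (B i *ᵥ fun β => x ⟨i, β⟩) α := by
  simp [mulVec, dotProduct, hV, Fintype.sum_sigma]

theorem eq_zero_of_blockwise_mulVec_apply_eq (hinj : ∀ i, Function.Injective (B i).mulVec)
    (hjoint : ⨅ i, LinearMap.range (B i).mulVecLin = ⊥)
    (hV : ∀ p c, V p c = if p.1 = c.1 then B c.1 p.2 c.2 else 0) {x : (Σ i, d i) → R}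
    (hx : ∀ i j α, (V *ᵥ x) (i, α) = (V *ᵥ x) (j, α)) : x = 0 := by
  have hcommon : ∀ i j, (B i *ᵥ fun β => x ⟨i, β⟩) = B j *ᵥ fun β => x ⟨j, β⟩ :=
    fun i j => funext fun α => by simpa only [mulVec_apply_of_blockwise hV] using hx i j α
  have hzero : ∀ i, (B i *ᵥ fun β => x ⟨i, β⟩) = 0 := fun i => by
    have hmem : (B i *ᵥ fun β => x ⟨i, β⟩) ∈ ⨅ j, LinearMap.range (B j).mulVecLin :=
      Submodule.mem_iInf _ |>.2 fun j => ⟨_, (hcommon i j).symm⟩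
    rwa [hjoint, Submodule.mem_bot] at hmem
  funext ⟨i, β⟩
  exact congrFun (hinj i ((hzero i).trans (mulVec_zero _).symm)) β

end BlockColumns

end Matrix

theorem stmt14_general {m n : ℕ} {nd : Fin m → ℕ}
    (S : Matrix (Fin m) (Fin m) ℝ)
    (hnonneg : ∀ i j, 0 ≤ S i j)
    (hrow : ∀ i, ∑ j, S i j = 1)
    (hconn : ∀ i j : Fin m, Relation.TransGen (fun a b => S a b ≠ 0) i j)
    (hdiag : ∀ i, 0 < S i i)
    (pi : Fin m → ℝ) (hpos : ∀ i, 0 < pi i)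
    (hPerron : S.transpose.mulVec pi = pi)
    (L : Matrix (Fin m) (Fin m) ℝ)
    (hL : L = Matrix.diagonal pi - S.transpose * Matrix.diagonal pi * S)
    (Lbar : Matrix (Fin m × Fin n) (Fin m × Fin n) ℝ)
    (hLbar : Lbar = Matrix.kroneckerMap (· * ·) L (1 : Matrix (Fin n) (Fin n) ℝ))
    (Vblk : ∀ i : Fin m, Matrix (Fin n) (Fin (nd i)) ℝ)
    (horth : ∀ i, (Vblk i).transpose * Vblk i = 1)
    (hjoint : (⨅ i : Fin m, LinearMap.range (Vblk i).mulVecLin) = ⊥)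
    (V : Matrix (Fin m × Fin n) (Σ i : Fin m, Fin (nd i)) ℝ)
    (hV : ∀ p c, V p c = if p.1 = c.1 then Vblk c.1 p.2 c.2 else 0) :
    (V.transpose * Lbar * V).PosDef := by
  have hLpsd : (stochasticLaplacian S pi).PosSemidef :=
    posSemidef_stochasticLaplacian hnonneg hrow hPerron fun i => (hpos i).le
  have hinj : ∀ i, Function.Injective (Vblk i).mulVec := fun i =>
    Function.LeftInverse.injective (g := ((Vblk i)ᵀ *ᵥ ·)) fun v => by
      simp only [mulVec_mulVec, horth i, one_mulVec]
  subst hL hLbar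
  rw [← conjTranspose_eq_transpose_of_trivial]
  refine (hLpsd.kronecker PosSemidef.one).posDef_conjTranspose_mul_mul_same fun x hx => ?_
  refine eq_zero_of_blockwise_mulVec_apply_eq hinj hjoint hV fun i j α => ?_
  refine eq_of_stochasticLaplacian_mulVec_eq_zero hnonneg hrow hPerron hdiag hpos hconn
    (y := fun k => (V *ᵥ x) (k, α)) ?_ i j
  funext k
  simpa only [kronecker_one_mulVec_apply, Pi.zero_apply] using congrFun hx (k, α)

/-- Under the assumptions of Proposition 1, `Vᵀ L̄ V` is positive definite,
where `L̄ = L ⊗ Iₙ` and `L = Π_S − SᵀΠ_S S`. -/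
theorem stmt14 {m n : ℕ} {nd : Fin m → ℕ}
    (S : Matrix (Fin m) (Fin m) ℝ)
    (hnonneg : ∀ i j, 0 ≤ S i j)
    (hrow : ∀ i, ∑ j, S i j = 1)
    (hconn : ∀ i j : Fin m, Relation.TransGen (fun a b => S a b ≠ 0) i j)
    (hdiag : ∀ i, 0 < S i i)
    (pi : Fin m → ℝ) (hpos : ∀ i, 0 < pi i) (hsum : ∑ i, pi i = 1)
    (hPerron : S.transpose.mulVec pi = pi)
    (L : Matrix (Fin m) (Fin m) ℝ)
    (hL : L = Matrix.diagonal pi - S.transpose * Matrix.diagonal pi * S)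
    (Lbar : Matrix (Fin m × Fin n) (Fin m × Fin n) ℝ)
    (hLbar : Lbar = Matrix.kroneckerMap (· * ·) L (1 : Matrix (Fin n) (Fin n) ℝ))
    (Vblk : ∀ i : Fin m, Matrix (Fin n) (Fin (nd i)) ℝ)
    (horth : ∀ i, (Vblk i).transpose * Vblk i = 1)
    (hjoint : (⨅ i : Fin m, LinearMap.range (Vblk i).mulVecLin) = ⊥)
    (V : Matrix (Fin m × Fin n) (Σ i : Fin m, Fin (nd i)) ℝ)
    (hV : ∀ p c, V p c = if p.1 = c.1 then Vblk c.1 p.2 c.2 else 0) :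
    (V.transpose * Lbar * V).PosDef :=
  stmt14_general S hnonneg hrow hconn hdiag pi hpos hPerron L hL Lbar hLbar Vblk horth hjoint V hV
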